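/- arXiv:2006.14425 — 10 statements merged into one kernel-verified Lean document; each statement's English description precedes it below -/
import Mathlib

section
/- Let p be an odd prime, and P, Q integers with D = P^2 - 4Q such that D is a quadratic nonresidue modulo p (i.e., the Legendre symbol (D/p) = -1). Then U_{p+1} ≡ 0 (mod p), where U is the Lucas sequence with parameters P, Q. -/
def lucasU (P Q : ℤ) : ℕ → ℤ
  | 0 => 0
  | 1 => 1
  | k + 2 => P * lucasU P Q (k + 1) - Q * lucasU P Q k

def lucasV (P Q : ℤ) : ℕ → ℤ
  | 0 => 2
  | 1 => P
  | k + 2 => P * lucasV P Q (k + 1) - Q * lucasV P Q k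

/-!
Over a field `K ⊇ 𝔽_p` containing a square root `s` of `D`, the roots of `X² - P X + Q` are
`α, β = (P ± s)/2`, and `U_k (α - β) = α^k - β^k`. Euler's criterion gives `s^p = D^{(p-1)/2} s = -s`,
so the Frobenius swaps `α` and `β`. Hence `α^{p+1} = αβ = Q = β^{p+1}`, and since `α - β = s ≠ 0`,
`U_{p+1}` vanishes in `K`, i.e. modulo `p`.
-/

theorem lucasU_mul_sub_eq_pow_sub_pow {R : Type*} [CommRing R] {P Q : ℤ} {α β : R}
    (hsum : α + β = P) (hprod : α * β = Q) (k : ℕ) :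
    (lucasU P Q k : R) * (α - β) = α ^ k - β ^ k := by
  induction k using Nat.twoStepInduction with
  | zero => simp [lucasU]
  | one => simp [lucasU]
  | more n ih₁ ih₂ =>
    rw [lucasU, Int.cast_sub, Int.cast_mul, Int.cast_mul, ← hsum, ← hprod]
    linear_combination (α + β) * ih₂ - α * β * ih₁

theorem half_add_mul_half_add_neg {K : Type*} [Field K] (h2 : (2 : K) ≠ 0) {P Q : ℤ} {s : K}
    (hs : s ^ 2 = (P : K) ^ 2 - 4 * (Q : K)) : (P + s) / 2 * ((P + -s) / 2) = (Q : K) := by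
  field_simp
  linear_combination -hs

theorem lucasU_mul_eq_half_add_pow_sub_half_add_pow {K : Type*} [Field K] (h2 : (2 : K) ≠ 0)
    {P Q : ℤ} {s : K} (hs : s ^ 2 = (P : K) ^ 2 - 4 * (Q : K)) (k : ℕ) :
    (lucasU P Q k : K) * s = ((P + s) / 2) ^ k - ((P + -s) / 2) ^ k := by
  have hsum : (P + s) / 2 + (P + -s) / 2 = (P : K) := by field_simp; ring
  have hdiff : (P + s) / 2 - (P + -s) / 2 = s := by field_simp; ring
  rw [← lucasU_mul_sub_eq_pow_sub_pow hsum (half_add_mul_half_add_neg h2 hs), hdiff]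

theorem pow_char_eq_neg_of_sq_eq_of_legendreSym_eq_neg_one {K : Type*} [Field K] {p : ℕ}
    [Fact p.Prime] [CharP K p] (hodd : Odd p) {D : ℤ} (hD : legendreSym p D = -1) {s : K}
    (hs : s ^ 2 = D) : s ^ p = -s := by
  have heuler : (D : K) ^ (p / 2) = -1 := by
    have h := congrArg (ZMod.castHom (dvd_refl p) K) (legendreSym.eq_pow p D)
    rwa [map_pow, map_intCast, map_intCast, hD, Int.cast_neg, Int.cast_one, eq_comm] at h
  calc s ^ p = (s ^ 2) ^ (p / 2) * s := by
        rw [← pow_mul, ← pow_succ, Nat.two_mul_div_two_add_one_of_odd hodd]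
    _ = -s := by rw [hs, heuler, neg_one_mul]

theorem half_add_pow_char {K : Type*} [Field K] (p : ℕ) [Fact p.Prime] [CharP K p] (P : ℤ)
    (s : K) : ((P + s) / 2) ^ p = (P + s ^ p) / 2 := by
  have hcast : ∀ n : ℤ, (n : K) ^ p = n := fun n => by
    simpa only [frobenius_def] using map_intCast (frobenius K p) n
  rw [div_pow, add_pow_char, hcast, ← Int.cast_two (R := K), hcast]

theorem lucasU_succ_char_eq_zero_of_legendreSym_eq_neg_one {K : Type*} [Field K] {p : ℕ}
    [Fact p.Prime] [CharP K p] (hodd : Odd p) {P Q : ℤ} (hD : legendreSym p (P ^ 2 - 4 * Q) = -1)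
    {s : K} (hs : s ^ 2 = ((P ^ 2 - 4 * Q : ℤ) : K)) : (lucasU P Q (p + 1) : K) = 0 := by
  have h2 : (2 : K) ≠ 0 := Ring.two_ne_zero <| by
    rw [ringChar.eq K p]; rintro rfl; exact Nat.not_odd_iff_even.mpr even_two hodd
  have hs0 : s ≠ 0 := by
    rintro rfl
    rw [zero_pow two_ne_zero, eq_comm, CharP.intCast_eq_zero_iff K p,
      ← ZMod.intCast_zmod_eq_zero_iff_dvd, ← legendreSym.eq_zero_iff, hD] at hs
    exact absurd hs (by decide)
  have hsp := pow_char_eq_neg_of_sq_eq_of_legendreSym_eq_neg_one hodd hD hs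
  have hs' : s ^ 2 = (P : K) ^ 2 - 4 * (Q : K) := by push_cast at hs; exact hs
  have hprod := half_add_mul_half_add_neg h2 hs'
  have hα : ((P + s) / 2 : K) ^ (p + 1) = Q := by
    rw [pow_succ, half_add_pow_char, hsp, mul_comm, hprod]
  have hβ : ((P + -s) / 2 : K) ^ (p + 1) = Q := by
    rw [pow_succ, half_add_pow_char, hodd.neg_pow, hsp, neg_neg, hprod]
  have hU := lucasU_mul_eq_half_add_pow_sub_half_add_pow h2 hs' (p + 1)
  rw [hα, hβ, sub_self, mul_eq_zero] at hU
  exact hU.resolve_right hs0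

theorem stmt_3_general (p : ℕ) (hodd : Odd p) [Fact p.Prime] (P Q : ℤ)
    (hD : legendreSym p (P ^ 2 - 4 * Q) = -1) :
    (p : ℤ) ∣ lucasU P Q (p + 1) := by
  obtain ⟨s, hs⟩ := IsAlgClosed.exists_pow_nat_eq
    ((P ^ 2 - 4 * Q : ℤ) : AlgebraicClosure (ZMod p)) two_pos
  exact (CharP.intCast_eq_zero_iff _ p _).mp
    (lucasU_succ_char_eq_zero_of_legendreSym_eq_neg_one hodd hD hs)

theorem stmt_3 (p : ℕ) (hp : p.Prime) (hodd : Odd p) [Fact p.Prime] (P Q : ℤ)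
    (hD : legendreSym p (P ^ 2 - 4 * Q) = -1) :
    (p : ℤ) ∣ lucasU P Q (p + 1) :=
  stmt_3_general p hodd P Q hD
end

section
/- Let p be an odd prime, and P, Q integers with D = P^2 - 4Q such that (D/p) = -1. Then V_{p+1} ≡ 2Q (mod p), where V is the Lucas V-sequence with parameters P, Q. -/
theorem lucasV_eq_pow_add_pow {R : Type*} [CommRing R] {P Q : ℤ} {α β : R}
    (hsum : α + β = P) (hprod : α * β = Q) (n : ℕ) :
    (lucasV P Q n : R) = α ^ n + β ^ n := by
  induction n using Nat.twoStepInduction with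
  | zero => norm_num [lucasV]
  | one => simp [lucasV, hsum]
  | more n ih₀ ih₁ =>
    rw [lucasV, Int.cast_sub, Int.cast_mul, Int.cast_mul, ih₀, ih₁, ← hsum, ← hprod]
    ring

theorem pow_eq_neg_of_sq_pow_half_eq_neg_one {M : Type*} [Monoid M] [HasDistribNeg M] {n : ℕ}
    (hn : Odd n) {θ : M} (hθ : (θ ^ 2) ^ (n / 2) = -1) : θ ^ n = -θ := by
  rw [← Nat.two_mul_div_two_add_one_of_odd hn, pow_succ, pow_mul, hθ, neg_one_mul]

section CharP

variable {R : Type*} [CommRing R] {p : ℕ} [Fact p.Prime] [CharP R p]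

theorem isUnit_two_of_charP (hp : p ≠ 2) : IsUnit (2 : R) := by
  have h2 : (2 : ZMod p) ≠ 0 := by
    intro h
    have : p ∣ 2 := (ZMod.natCast_eq_zero_iff 2 p).mp (by exact_mod_cast h)
    exact hp ((Nat.prime_dvd_prime_iff_eq Fact.out Nat.prime_two).mp this)
  simpa only [map_ofNat] using h2.isUnit.map (ZMod.castHom (dvd_refl p) R)

theorem intCast_pow_char (n : ℤ) : (n : R) ^ p = n := by
  rw [← frobenius_def, map_intCast]

theorem pow_char_eq_of_sub_pow_char (hp : p ≠ 2) {P : ℤ} {α β : R} (hsum : α + β = P)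
    (hfrob : (α - β) ^ p = β - α) : α ^ p = β := by
  have hadd : α ^ p + β ^ p = α + β := by rw [← add_pow_char, hsum, intCast_pow_char]
  rw [sub_pow_char] at hfrob
  refine (isUnit_two_of_charP (R := R) hp).mul_left_cancel ?_
  linear_combination hadd + hfrob

theorem lucasV_char_add_one (hp : Odd p) {P Q : ℤ} {α β : R} (hsum : α + β = P)
    (hprod : α * β = Q) (hD : ((P ^ 2 - 4 * Q : ℤ) : R) ^ (p / 2) = -1) :
    (lucasV P Q (p + 1) : R) = 2 * Q := by
  have hp2 : p ≠ 2 := by rintro rfl; exact Nat.not_odd_iff_even.mpr even_two hp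
  have hdisc : (α - β) ^ 2 = ((P ^ 2 - 4 * Q : ℤ) : R) := by
    push_cast; rw [← hsum, ← hprod]; ring
  have hθ : (α - β) ^ p = β - α := by
    rw [pow_eq_neg_of_sq_pow_half_eq_neg_one hp (hdisc ▸ hD), neg_sub]
  have hα : α ^ p = β := pow_char_eq_of_sub_pow_char hp2 hsum hθ
  have hβ : β ^ p = α :=
    pow_char_eq_of_sub_pow_char hp2 (by rw [add_comm, hsum])
      (by rw [← neg_sub, hp.neg_pow, hθ, neg_sub])
  rw [lucasV_eq_pow_add_pow hsum hprod, pow_succ, pow_succ, hα, hβ, ← hprod]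
  ring

end CharP

open Polynomial in
theorem lucasV_add_one_zmod {p : ℕ} [Fact p.Prime] (hp : Odd p) {P Q : ℤ}
    (hD : ((P ^ 2 - 4 * Q : ℤ) : ZMod p) ^ (p / 2) = -1) :
    (lucasV P Q (p + 1) : ZMod p) = 2 * Q := by
  set f : (ZMod p)[X] := X ^ 2 - C (P : ZMod p) * X + C (Q : ZMod p)
  have hdeg : f.degree = 2 := by unfold f; compute_degree!
  have hinj : Function.Injective (AdjoinRoot.of f) :=
    AdjoinRoot.of.injective_of_degree_ne_zero (by rw [hdeg]; decide)
  have : CharP (AdjoinRoot f) p := charP_of_injective_ringHom hinj p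
  set α := AdjoinRoot.root f
  have hroot : α ^ 2 - P * α + Q = 0 := by
    have := AdjoinRoot.eval₂_root f
    simp only [f, eval₂_add, eval₂_sub, eval₂_mul, eval₂_pow, eval₂_X, eval₂_C] at this
    simpa only [map_intCast] using this
  have hD' : ((P ^ 2 - 4 * Q : ℤ) : AdjoinRoot f) ^ (p / 2) = -1 := by
    simpa only [map_pow, map_neg, map_one, map_intCast] using congrArg (AdjoinRoot.of f) hD
  apply hinj
  simpa only [map_intCast, map_mul, map_ofNat] using
    lucasV_char_add_one hp (add_sub_cancel α (P : AdjoinRoot f)) (by linear_combination -hroot) hD'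

theorem stmt_4_general (p : ℕ) (hodd : Odd p) [Fact p.Prime] (P Q : ℤ)
    (hD : legendreSym p (P ^ 2 - 4 * Q) = -1) :
    lucasV P Q (p + 1) ≡ 2 * Q [ZMOD p] := by
  have hD' : ((P ^ 2 - 4 * Q : ℤ) : ZMod p) ^ (p / 2) = -1 := by
    rw [← legendreSym.eq_pow, hD]; push_cast; rfl
  rw [← ZMod.intCast_eq_intCast_iff]
  push_cast
  exact lucasV_add_one_zmod hodd hD'

theorem stmt_4 (p : ℕ) (hp : p.Prime) (hodd : Odd p) [Fact p.Prime] (P Q : ℤ)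
    (hD : legendreSym p (P ^ 2 - 4 * Q) = -1) :
    lucasV P Q (p + 1) ≡ 2 * Q [ZMOD p] :=
  stmt_4_general p hodd P Q hD
end

section
/- Let n ≡ 3 (mod 4) be an odd composite integer that is a strong pseudoprime to base 2, and let k ≥ 1 be an integer. Set P = 2^k and Q = 2^{2k-1}. Then n is a Lucas-V pseudoprime with parameters P, Q; that is, V_{n+1} ≡ 2Q (mod n), where V is the Lucas V-sequence with parameters P, Q, and D = P^2 - 4Q satisfies the Jacobi symbol condition (D/n) = -1. -/
/-- `n` is a strong pseudoprime to base 2. -/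
def SPsp2 (n : ℕ) : Prop :=
  Odd n ∧ ¬ n.Prime ∧ 1 < n ∧
  ∃ d s : ℕ, Odd d ∧ n - 1 = d * 2 ^ s ∧
    ((2 : ZMod n) ^ d = 1 ∨ ∃ r < s, (2 : ZMod n) ^ (d * 2 ^ r) = -1)

section LucasV

variable {P Q : ℤ}

theorem lucasV_add_four (hPQ : P ^ 2 = 2 * Q) : ∀ m, lucasV P Q (m + 4) = -Q ^ 2 * lucasV P Q m
  | 0 => by simp only [lucasV]; linear_combination (P ^ 2 - 2 * Q) * hPQ
  | 1 => by simp only [lucasV]; linear_combination (P ^ 3 - 3 * P * Q) * hPQ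
  | m + 2 => by
    rw [show m + 2 + 4 = (m + 4) + 2 by ring, lucasV, show m + 4 + 1 = (m + 1) + 4 by ring,
      lucasV_add_four hPQ m, lucasV_add_four hPQ (m + 1), lucasV]
    ring

theorem lucasV_four_mul (hPQ : P ^ 2 = 2 * Q) (q : ℕ) :
    lucasV P Q (4 * q) = 2 * (-Q ^ 2) ^ q := by
  induction q with
  | zero => simp [lucasV]
  | succ q ih => rw [mul_add_one, lucasV_add_four hPQ, ih]; ring

theorem lucasV_succ_modEq_of_mod_four_eq_three {n : ℕ} (hPQ : P ^ 2 = 2 * Q) (hn : n % 4 = 3)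
    (hQ : (Q : ZMod n) ^ (n / 2) = (-1) ^ ((n + 1) / 4)) :
    lucasV P Q (n + 1) ≡ 2 * Q [ZMOD n] := by
  set q := (n + 1) / 4
  have hn1 : n + 1 = 4 * q := by omega
  have hn2 : 2 * q = n / 2 + 1 := by omega
  rw [← ZMod.intCast_eq_intCast_iff, hn1, lucasV_four_mul hPQ]
  push_cast
  rw [neg_pow, ← pow_mul, hn2, pow_succ, hQ]
  have hsq : ((-1 : ZMod n) ^ q) ^ 2 = 1 := by
    rw [← pow_mul, mul_comm, pow_mul, neg_one_sq, one_pow]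
  linear_combination (2 * (Q : ZMod n)) * hsq

end LucasV

theorem SPsp2.two_pow_half_eq_one_or_neg_one {n : ℕ} (hn : n % 4 = 3) (h : SPsp2 n) :
    (2 : ZMod n) ^ (n / 2) = 1 ∨ (2 : ZMod n) ^ (n / 2) = -1 := by
  obtain ⟨-, -, -, d, s, hd, hds, hpow⟩ := h
  have hs : s = 1 := by
    rcases s with _ | _ | s
    · rw [pow_zero, mul_one] at hds
      exact absurd (Nat.odd_iff.mp hd) (by omega)
    · rfl
    · have : 4 ∣ n - 1 := ⟨d * 2 ^ s, by rw [hds]; ring⟩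
      omega
  subst hs
  have hdn : d = n / 2 := by omega
  subst hdn
  rcases hpow with h1 | ⟨r, hr, h1⟩
  · exact Or.inl h1
  · obtain rfl : r = 0 := by omega
    exact Or.inr (by simpa using h1)

theorem jacobiSym_eq_one_of_intCast_eq_sq {a c : ℤ} {n : ℕ} (hc : c.gcd n = 1)
    (h : (a : ZMod n) = (c : ZMod n) ^ 2) : jacobiSym a n = 1 := by
  rw [← Int.cast_pow, ZMod.intCast_eq_intCast_iff'] at h
  rw [jacobiSym.mod_left' h, jacobiSym.sq_one' hc]

theorem jacobiSym_eq_pow_half_of_mod_four_eq_three {a : ℤ} {n : ℕ} (hn : n % 4 = 3)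
    (ha : a.gcd n = 1) (h : (a : ZMod n) ^ (n / 2) = 1 ∨ (a : ZMod n) ^ (n / 2) = -1) :
    (jacobiSym a n : ZMod n) = (a : ZMod n) ^ (n / 2) := by
  have hc : (a ^ ((n + 1) / 4)).gcd n = 1 := Int.gcd_pow_left_of_gcd_eq_one ha
  have hsq : ((a ^ ((n + 1) / 4) : ℤ) : ZMod n) ^ 2 = (a : ZMod n) ^ (n / 2) * a := by
    rw [Int.cast_pow, ← pow_mul, ← pow_succ]
    congr 1
    omega
  rcases h with h1 | h1
  · rw [h1, one_mul] at hsq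
    rw [jacobiSym_eq_one_of_intCast_eq_sq hc hsq.symm, h1, Int.cast_one]
  · rw [h1, neg_one_mul] at hsq
    have hneg := jacobiSym_eq_one_of_intCast_eq_sq (a := -a) hc (by rw [Int.cast_neg, hsq])
    rw [neg_eq_neg_one_mul, jacobiSym.mul_left, jacobiSym.at_neg_one (Nat.odd_iff.mpr (by omega)),
      ZMod.χ₄_nat_three_mod_four hn] at hneg
    rw [h1, show jacobiSym a n = -1 by linear_combination -hneg]
    simp

theorem jacobiSym_two_of_mod_four_eq_three {n : ℕ} (hn : n % 4 = 3) :
    jacobiSym 2 n = (-1) ^ ((n + 1) / 4) := by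
  rw [jacobiSym.at_two (Nat.odd_iff.mpr (by omega)), ZMod.χ₈_nat_eq_if_mod_eight]
  rcases (by omega : n % 8 = 3 ∨ n % 8 = 7) with h8 | h8
  · have : Odd ((n + 1) / 4) := ⟨n / 8, by omega⟩
    simp [h8, show n % 2 = 1 by omega, this.neg_one_pow]
  · have : Even ((n + 1) / 4) := ⟨n / 8 + 1, by omega⟩
    simp [h8, show n % 2 = 1 by omega, this.neg_one_pow]

theorem jacobiSym_neg_sq_of_mod_four_eq_three {b : ℤ} {n : ℕ} (hn : n % 4 = 3)
    (hb : b.gcd n = 1) :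
    jacobiSym (-b ^ 2) n = -1 := by
  rw [neg_eq_neg_one_mul, jacobiSym.mul_left, jacobiSym.at_neg_one (Nat.odd_iff.mpr (by omega)),
    ZMod.χ₄_nat_three_mod_four hn, jacobiSym.sq_one' hb, mul_one]

theorem stmt_7 (n : ℕ) (hn4 : n % 4 = 3) (hspsp : SPsp2 n) (k : ℕ) (hk : 1 ≤ k) :
    lucasV (2 ^ k) (2 ^ (2 * k - 1)) (n + 1) ≡ 2 * 2 ^ (2 * k - 1) [ZMOD (n : ℤ)] ∧
    jacobiSym ((2 ^ k : ℤ) ^ 2 - 4 * 2 ^ (2 * k - 1)) n = -1 := by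
  have hPQ : ((2 : ℤ) ^ k) ^ 2 = 2 * 2 ^ (2 * k - 1) := by
    rw [← pow_succ', ← pow_mul]
    congr 1
    omega
  have h2 : (2 : ℤ).gcd n = 1 := Int.gcd_natCast_natCast 2 n ▸ Nat.coprime_two_left.mpr hspsp.1
  have hEuler := jacobiSym_eq_pow_half_of_mod_four_eq_three hn4 h2
    (by exact_mod_cast hspsp.two_pow_half_eq_one_or_neg_one hn4)
  rw [jacobiSym_two_of_mod_four_eq_three hn4] at hEuler
  constructor
  · refine lucasV_succ_modEq_of_mod_four_eq_three hPQ hn4 ?_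
    have hodd : Odd (2 * k - 1) := ⟨k - 1, by omega⟩
    push_cast at hEuler ⊢
    rw [← pow_mul, mul_comm, pow_mul, ← hEuler, ← pow_mul, mul_comm, pow_mul,
      hodd.neg_one_pow]
  · rw [show ((2 : ℤ) ^ k) ^ 2 - 4 * 2 ^ (2 * k - 1) = -((2 : ℤ) ^ k) ^ 2 by
      linear_combination 2 * hPQ]
    exact jacobiSym_neg_sq_of_mod_four_eq_three hn4 (Int.gcd_pow_left_of_gcd_eq_one h2)
end

section
/- Let n ≡ 3 (mod 4) be odd, let k ≥ 1, P = 2^k, Q = 2^{2k-1}, and write n + 1 = d·2^s with d odd. Then s ≥ 2 and V_{2d} ≡ 0 (mod n) holds unconditionally, where V is the Lucas V-sequence with parameters P, Q. In particular, if n is composite, n is a strong Lucas pseudoprime with parameters P, Q. -/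
lemma lucasV_step (P Q : ℤ) (h : P ^ 2 = 2 * Q) (m : ℕ) :
    lucasV P Q (m + 4) = -Q ^ 2 * lucasV P Q m := by
  show P * lucasV P Q (m + 3) - Q * lucasV P Q (m + 2) = _
  show P * (P * lucasV P Q (m + 2) - Q * lucasV P Q (m + 1)) - Q * lucasV P Q (m + 2) = _
  show P * (P * (P * lucasV P Q (m + 1) - Q * lucasV P Q m) - Q * lucasV P Q (m + 1))
      - Q * (P * lucasV P Q (m + 1) - Q * lucasV P Q m) = _
  linear_combination (P * lucasV P Q (m + 1) - Q * lucasV P Q m) * h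

lemma lucasV_zero (P Q : ℤ) (h : P ^ 2 = 2 * Q) : ∀ j, lucasV P Q (4 * j + 2) = 0 := by
  intro j
  induction j with
  | zero =>
    show P * P - Q * 2 = 0
    nlinarith [h]
  | succ j ih =>
    have : 4 * (j + 1) + 2 = (4 * j + 2) + 4 := by ring
    rw [this, lucasV_step P Q h, ih, mul_zero]

theorem stmt_8 (n : ℕ) (hodd : Odd n) (hn4 : n % 4 = 3) (k : ℕ) (hk : 1 ≤ k)
    (d s : ℕ) (hd : Odd d) (hds : n + 1 = d * 2 ^ s) :
    2 ≤ s ∧ (n : ℤ) ∣ lucasV (2 ^ k) (2 ^ (2 * k - 1)) (2 * d) ∧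
    (¬ n.Prime →
      jacobiSym ((2 ^ k : ℤ) ^ 2 - 4 * 2 ^ (2 * k - 1)) n = -1 ∧
      ∃ r < s, (n : ℤ) ∣ lucasV (2 ^ k) (2 ^ (2 * k - 1)) (d * 2 ^ r)) := by
  have hP : ((2 : ℤ) ^ k) ^ 2 = 2 * 2 ^ (2 * k - 1) := by
    rw [← pow_mul, ← pow_succ']
    congr 1
    omega
  obtain ⟨j, hj⟩ := hd
  have hV : lucasV (2 ^ k) (2 ^ (2 * k - 1)) (2 * d) = 0 := by
    have : 2 * d = 4 * j + 2 := by omega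
    rw [this]; exact lucasV_zero _ _ hP j
  have hs : 2 ≤ s := by
    by_contra h
    interval_cases s <;> omega
  refine ⟨hs, hV ▸ dvd_zero _, fun _ => ⟨?_, 1, by omega, ?_⟩⟩
  · have hD : ((2 : ℤ) ^ k) ^ 2 - 4 * 2 ^ (2 * k - 1) = -1 * ((2 : ℤ) ^ k) ^ 2 := by
      rw [hP]; ring
    have hgcd : ((2 : ℤ) ^ k).gcd n = 1 := by
      rw [Int.gcd]
      simp only [Int.natAbs_pow, Int.natAbs_natCast]
      exact Nat.Coprime.pow_left _ (Nat.coprime_two_left.mpr hodd).symm.symm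
        |>.symm.symm
    rw [hD, jacobiSym.mul_left, jacobiSym.sq_one' hgcd, mul_one,
      jacobiSym.at_neg_one hodd, ZMod.χ₄_nat_three_mod_four hn4]
  · have : d * 2 ^ 1 = 2 * d := by ring
    rw [this, hV]; exact dvd_zero _
end

section
/- For all k ≥ 0, one has V_{n+1}(P,Q) ≡ 2Q·(2^{n-1})^{k-1}·(-1)^M·2^{(n-1)/2} where n ≡ 3 (mod 4), M = (n+1)/4, P = 2^k, Q = 2^{2k-1}; more precisely, over the reals, V_{n+1} = 2·(4·2^{n-1})^{k-1}·(-4)^M with the roots α = 2^{k-1}(1+i), β = 2^{k-1}(1-i). -/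
open Complex in
theorem stmt_9 (n : ℕ) (hodd : Odd n) (hn4 : n % 4 = 3) (k : ℕ) (hk : 1 ≤ k)
    (M : ℕ) (hM : M = (n + 1) / 4)
    (α β : ℂ) (hα : α = 2 ^ (k - 1) * (1 + I)) (hβ : β = 2 ^ (k - 1) * (1 - I)) :
    α ^ (n + 1) + β ^ (n + 1) = 2 * (4 * 2 ^ (n - 1)) ^ (k - 1) * (-4 : ℂ) ^ M := by
  subst hα hβ hM
  obtain ⟨m, rfl⟩ : ∃ m, n = 4 * m + 3 := ⟨n / 4, by omega⟩
  have hp : ((1 : ℂ) + I) ^ 4 = -4 := by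
    have h2 : ((1 : ℂ) + I) ^ 2 = 2 * I := by
      have := Complex.I_sq
      ring_nf
      rw [Complex.I_sq]; ring
    calc ((1 : ℂ) + I) ^ 4 = (((1 : ℂ) + I) ^ 2) ^ 2 := by ring
      _ = (2 * I) ^ 2 := by rw [h2]
      _ = -4 := by rw [mul_pow, Complex.I_sq]; ring
  have hq : ((1 : ℂ) - I) ^ 4 = -4 := by
    have h2 : ((1 : ℂ) - I) ^ 2 = -(2 * I) := by
      ring_nf
      rw [Complex.I_sq]; ring
    calc ((1 : ℂ) - I) ^ 4 = (((1 : ℂ) - I) ^ 2) ^ 2 := by ring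
      _ = (-(2 * I)) ^ 2 := by rw [h2]
      _ = -4 := by rw [neg_pow, mul_pow, Complex.I_sq]; ring
  have e1 : ((1 : ℂ) + I) ^ (4 * m + 3 + 1) = (-4 : ℂ) ^ (m + 1) := by
    rw [show 4 * m + 3 + 1 = 4 * (m + 1) by ring, pow_mul, hp]
  have e2 : ((1 : ℂ) - I) ^ (4 * m + 3 + 1) = (-4 : ℂ) ^ (m + 1) := by
    rw [show 4 * m + 3 + 1 = 4 * (m + 1) by ring, pow_mul, hq]
  have eM : (4 * m + 3 + 1) / 4 = m + 1 := by omega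
  have e3 : ((4 : ℂ) * 2 ^ (4 * m + 3 - 1)) = 2 ^ (4 * m + 3 + 1) := by
    rw [show 4 * m + 3 - 1 = 4 * m + 2 by omega, show 4 * m + 3 + 1 = (4 * m + 2) + 2 by omega,
      pow_add]
    ring
  have e4 : ((2 : ℂ) ^ (k - 1)) ^ (4 * m + 3 + 1) = ((2 : ℂ) ^ (4 * m + 3 + 1)) ^ (k - 1) := by
    rw [← pow_mul, ← pow_mul, Nat.mul_comm]
  rw [eM, mul_pow, mul_pow, e1, e2, e3, e4]
  ring
end

section
/- If n ≡ 3 (mod 4) and n is an Euler pseudoprime to base a (i.e., composite with gcd(a,n) = 1 and a^{(n-1)/2} ≡ (a/n) (mod n)), then n is a strong pseudoprime to base a, and conversely. -/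
private lemma legendre_of_pow_eq_one {p : ℕ} [Fact p.Prime] {a : ℤ} {d : ℕ} (hd : Odd d)
    (h : (a : ZMod p) ^ d = 1) : legendreSym p a = 1 := by
  have hd0 : d ≠ 0 := by rintro rfl; simp at hd
  have ha0 : (a : ZMod p) ≠ 0 := by
    intro h0
    rw [h0, zero_pow hd0] at h
    exact zero_ne_one h
  rw [legendreSym.eq_one_iff p ha0]
  obtain ⟨k, hk⟩ := hd
  refine ⟨(a : ZMod p) ^ (k + 1), ?_⟩
  rw [← pow_add]
  have he : k + 1 + (k + 1) = d + 1 := by omega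
  rw [he, pow_succ, h, one_mul]

private lemma legendre_of_pow_eq_neg_one {p : ℕ} [Fact p.Prime] (hp2 : p % 2 = 1) {a : ℤ}
    {d : ℕ} (hd : Odd d) (h : (a : ZMod p) ^ d = -1) :
    legendreSym p a = if p % 4 = 3 then -1 else 1 := by
  have hp : p.Prime := Fact.out
  have hp3 : 3 ≤ p := by have := hp.two_le; omega
  haveI : Fact (2 < p) := ⟨by omega⟩
  have hne : (-1 : ZMod p) ≠ 1 := CharP.neg_one_ne_one (ZMod p) p
  have hd0 : d ≠ 0 := by rintro rfl; simp at hd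
  set b : ZMod p := (a : ZMod p) with hb
  have hb0 : b ≠ 0 := by
    intro h0
    rw [h0, zero_pow hd0] at h
    have h1 : (-1 : ZMod p) = 0 := h.symm
    exact one_ne_zero (neg_eq_zero.mp h1)
  have h2d : b ^ (d * 2) = 1 := by rw [pow_mul, h]; norm_num
  have hω2d : orderOf b ∣ d * 2 := orderOf_dvd_of_pow_eq_one h2d
  have hωd : ¬ orderOf b ∣ d := by
    intro hh
    rw [orderOf_dvd_iff_pow_eq_one] at hh
    rw [hh] at h
    exact hne h.symm
  have hωeven : Even (orderOf b) := by
    by_contra hodd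
    rw [Nat.not_even_iff_odd] at hodd
    have hc : (orderOf b).Coprime 2 := by
      exact Nat.coprime_two_right.mpr hodd
    exact hωd (hc.dvd_of_dvd_mul_right hω2d)
  obtain ⟨m, hm⟩ : ∃ m, orderOf b = 2 * m := by
    obtain ⟨m, hm⟩ := hωeven; exact ⟨m, by omega⟩
  have hm0 : m ≠ 0 := by
    rintro rfl
    rw [Nat.mul_zero] at hm
    rw [hm] at hω2d
    have : d * 2 = 0 := Nat.eq_zero_of_zero_dvd hω2d
    omega
  have hmd : m ∣ d := by
    have h' : 2 * m ∣ 2 * d := by rw [← hm]; rwa [Nat.mul_comm d 2] at hω2d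
    exact (mul_dvd_mul_iff_left (two_ne_zero)).mp h'
  have hmodd : Odd m := by
    rcases Nat.even_or_odd m with he | ho
    · exfalso
      have h2 : 2 ∣ d := dvd_trans he.two_dvd hmd
      rw [Nat.odd_iff] at hd; omega
    · exact ho
  have hbm : b ^ m = -1 := by
    have hsq : b ^ m * b ^ m = 1 := by
      rw [← pow_add]
      have he : m + m = orderOf b := by omega
      rw [he, pow_orderOf_eq_one]
    rcases mul_self_eq_one_iff.mp hsq with h1 | h1
    · exfalso
      have hdvd : orderOf b ∣ m := orderOf_dvd_of_pow_eq_one h1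
      rw [hm] at hdvd
      have := Nat.le_of_dvd (by omega) hdvd
      omega
    · exact h1
  have hωp : orderOf b ∣ p - 1 := orderOf_dvd_of_pow_eq_one (ZMod.pow_card_sub_one_eq_one hb0)
  have hp4 : p % 4 = 1 ∨ p % 4 = 3 := by omega
  have hpt : p - 1 = 2 * (p / 2) := by omega
  set t := p / 2 with ht
  have hmt : m ∣ t := by
    have h' : 2 * m ∣ 2 * t := by rw [← hm, ← hpt]; exact hωp
    exact (mul_dvd_mul_iff_left (two_ne_zero)).mp h'
  rcases hp4 with h1 | h3
  · rw [if_neg (by omega)]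
    have hteven : 2 ∣ t := by omega
    have hc : m.Coprime 2 := Nat.coprime_two_right.mpr hmodd
    have h2mt : 2 * m ∣ t := by
      rw [Nat.mul_comm]
      exact hc.mul_dvd_of_dvd_of_dvd hmt hteven
    have hbt : b ^ t = 1 := by
      rw [← hm] at h2mt
      exact orderOf_dvd_iff_pow_eq_one.mp h2mt
    rw [legendreSym.eq_one_iff p hb0]
    exact (ZMod.euler_criterion p hb0).mpr hbt
  · rw [if_pos h3]
    have htodd : t % 2 = 1 := by omega
    have hbt : b ^ t = -1 := by
      obtain ⟨u, hu⟩ := hmt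
      have huodd : u % 2 = 1 := by
        rcases Nat.even_or_odd u with he | ho
        · exfalso
          obtain ⟨v, hv⟩ := he
          have h2t : 2 ∣ t := ⟨m * v, by rw [hu, hv]; ring⟩
          omega
        · exact Nat.odd_iff.mp ho
      rw [hu, pow_mul, hbm, Odd.neg_one_pow (Nat.odd_iff.mpr huodd)]
    rw [legendreSym.eq_neg_one_iff p]
    intro hsq
    have h1 := (ZMod.euler_criterion p hb0).mp hsq
    rw [← ht] at h1
    rw [h1] at hbt
    exact hne hbt.symm

private lemma if_mul_if (p m : ℕ) (hp : p % 2 = 1) (hm : m % 2 = 1) :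
    ((if p % 4 = 3 then (-1 : ℤ) else 1) * (if m % 4 = 3 then (-1 : ℤ) else 1)) =
      if (p * m) % 4 = 3 then (-1 : ℤ) else 1 := by
  have h4 : (p * m) % 4 = (p % 4) * (m % 4) % 4 := Nat.mul_mod p m 4
  have hp4 : p % 4 = 1 ∨ p % 4 = 3 := by omega
  have hm4 : m % 4 = 1 ∨ m % 4 = 3 := by omega
  rcases hp4 with h1 | h1 <;> rcases hm4 with h2 | h2 <;>
    rw [h1, h2] at h4 <;> norm_num at h4 <;> simp [h1, h2, h4]

private lemma jacobi_of_pow_eq_one :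
    ∀ n : ℕ, n % 2 = 1 → ∀ a : ℤ, ∀ d : ℕ, Odd d →
      (a : ZMod n) ^ d = 1 → jacobiSym a n = 1 := by
  intro n
  induction n using Nat.strong_induction_on with
  | _ n ih =>
    intro hn2 a d hd h
    rcases eq_or_ne n 1 with rfl | hn1
    · exact jacobiSym.one_right a
    · have hn0 : n ≠ 0 := by omega
      set p := n.minFac with hpdef
      have hp : p.Prime := Nat.minFac_prime hn1
      haveI : Fact p.Prime := ⟨hp⟩
      obtain ⟨m, hnm⟩ := Nat.minFac_dvd n
      have hm0 : m ≠ 0 := by rintro rfl; rw [Nat.mul_zero] at hnm; exact hn0 hnm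
      have hp2 : 2 ≤ p := hp.two_le
      have hmn : m < n := by
        calc m < 2 * m := by omega
        _ ≤ p * m := Nat.mul_le_mul_right m hp2
        _ = n := hnm.symm
      have hmdvd : m ∣ n := ⟨p, by rw [hnm]; ring⟩
      have hm2 : m % 2 = 1 := by
        rcases Nat.even_or_odd m with he | ho
        · exfalso
          have h2 : 2 ∣ n := dvd_trans he.two_dvd hmdvd
          omega
        · exact Nat.odd_iff.mp ho
      have key : ∀ k : ℕ, k ∣ n → (a : ZMod k) ^ d = 1 := by
        intro k hk
        have hc := congrArg (ZMod.castHom hk (ZMod k)) h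
        rwa [map_pow, map_intCast, map_one] at hc
      haveI : NeZero p := ⟨by omega⟩
      haveI : NeZero m := ⟨hm0⟩
      rw [hnm, jacobiSym.mul_right, ← jacobiSym.legendreSym.to_jacobiSym,
        legendre_of_pow_eq_one hd (key p (Dvd.intro m hnm.symm)),
        ih m hmn hm2 a d hd (key m hmdvd), mul_one]

private lemma jacobi_of_pow_eq_neg_one :
    ∀ n : ℕ, n % 2 = 1 → ∀ a : ℤ, ∀ d : ℕ, Odd d →
      (a : ZMod n) ^ d = -1 → jacobiSym a n = if n % 4 = 3 then -1 else 1 := by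
  intro n
  induction n using Nat.strong_induction_on with
  | _ n ih =>
    intro hn2 a d hd h
    rcases eq_or_ne n 1 with rfl | hn1
    · simp [jacobiSym.one_right a]
    · have hn0 : n ≠ 0 := by omega
      set p := n.minFac with hpdef
      have hp : p.Prime := Nat.minFac_prime hn1
      haveI : Fact p.Prime := ⟨hp⟩
      obtain ⟨m, hnm⟩ := Nat.minFac_dvd n
      have hm0 : m ≠ 0 := by rintro rfl; rw [Nat.mul_zero] at hnm; exact hn0 hnm
      have hp2 : 2 ≤ p := hp.two_le
      have hmn : m < n := by
        calc m < 2 * m := by omega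
        _ ≤ p * m := Nat.mul_le_mul_right m hp2
        _ = n := hnm.symm
      have hmdvd : m ∣ n := ⟨p, by rw [hnm]; ring⟩
      have hpdvd : p ∣ n := Dvd.intro m hnm.symm
      have hm2 : m % 2 = 1 := by
        rcases Nat.even_or_odd m with he | ho
        · exfalso
          have h2 : 2 ∣ n := dvd_trans he.two_dvd hmdvd
          omega
        · exact Nat.odd_iff.mp ho
      have hpodd : p % 2 = 1 := by
        rcases Nat.even_or_odd p with he | ho
        · exfalso
          have h2 : 2 ∣ n := dvd_trans he.two_dvd hpdvd
          omega
        · exact Nat.odd_iff.mp ho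
      have key : ∀ k : ℕ, k ∣ n → (a : ZMod k) ^ d = -1 := by
        intro k hk
        have hc := congrArg (ZMod.castHom hk (ZMod k)) h
        rwa [map_pow, map_intCast, map_neg, map_one] at hc
      haveI : NeZero p := ⟨by omega⟩
      haveI : NeZero m := ⟨hm0⟩
      rw [hnm, jacobiSym.mul_right, ← jacobiSym.legendreSym.to_jacobiSym,
        legendre_of_pow_eq_neg_one hpodd hd (key p hpdvd),
        ih m hmn hm2 a d hd (key m hmdvd), if_mul_if p m hpodd hm2]

theorem stmt_10 (n : ℕ) (hn4 : n % 4 = 3) (hcomp : ¬ n.Prime) (hn1 : 1 < n)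
    (a : ℤ) (ha : IsCoprime a (n : ℤ)) (d s : ℕ) (hd : Odd d) (hds : n - 1 = d * 2 ^ s) :
    ((a : ZMod n) ^ ((n - 1) / 2) = ((jacobiSym a n : ℤ) : ZMod n)) ↔
      ((a : ZMod n) ^ d = 1 ∨ ∃ r < s, (a : ZMod n) ^ (d * 2 ^ r) = -1) := by
  have hd2 : d % 2 = 1 := Nat.odd_iff.mp hd
  have hn2 : n % 2 = 1 := by omega
  -- establish s = 1
  have hs1 : s = 1 := by
    rcases s with _ | _ | s
    · simp at hds; omega
    · rfl
    · exfalso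
      have h4 : n - 1 = 4 * (d * 2 ^ s) := by
        rw [hds]; ring
      omega
  subst hs1
  have hdval : (n - 1) / 2 = d := by
    rw [pow_one] at hds
    omega
  rw [hdval]
  have hgcd : a.gcd n = 1 := Int.isCoprime_iff_gcd_eq_one.mp ha
  constructor
  · intro h
    rcases jacobiSym.eq_one_or_neg_one hgcd with hJ | hJ
    · left; rw [h, hJ]; norm_num
    · right
      exact ⟨0, by norm_num, by rw [pow_zero, mul_one, h, hJ]; push_cast; ring⟩
  · rintro (h | ⟨r, hr, h⟩)
    · rw [jacobi_of_pow_eq_one n hn2 a d hd h, h]; norm_num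
    · interval_cases r
      rw [pow_zero, mul_one] at h
      rw [jacobi_of_pow_eq_neg_one n hn2 a d hd h, if_pos hn4, h]
      push_cast
      ring
end

section
/- For every positive integer r there exists an integer a ≡ 3 (mod 4) such that for every odd prime p with p ≡ a (mod 4r), r is a quadratic residue modulo p, i.e., the Legendre symbol (r/p) = +1. -/
/-!
Take `a = 4r - 1`, so `p ≡ -1 (mod 4r)`. Write `r = 2^s t` with `t` odd. If `s > 0` then
`p ≡ 7 (mod 8)`, so `(2/p) = 1`. Since `p ≡ 3 (mod 4)`, reciprocity gives `(t/p) = ±(p/t)` with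
sign `+` iff `t ≡ 1 (mod 4)`, while `(p/t) = (-1/t)` is `+1` iff `t ≡ 1 (mod 4)`; either way
`(t/p) = 1`. Nothing here uses that `p` is prime, so the argument is run for the Jacobi symbol.
-/

open ZMod NumberTheorySymbols

namespace jacobiSym

theorem at_two_of_mod_eight_eq_seven {n : ℕ} (hn : n % 8 = 7) : J(2 | n) = 1 := by
  rw [at_two (Nat.odd_iff.mpr (by omega)), χ₈_nat_mod_eight, hn]
  rfl

theorem eq_one_of_odd_of_dvd_add_one {t n : ℕ} (ht : Odd t) (hn : n % 4 = 3)
    (hdvd : (t : ℤ) ∣ n + 1) : J(t | n) = 1 := by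
  have hflip : J(n | t) = χ₄ t := by
    have hneg : (n : ℤ) ≡ -1 [ZMOD t] :=
      Int.modEq_iff_dvd.mpr (by rw [show (-1 - n : ℤ) = -(n + 1) by ring]; exact hdvd.neg_right)
    rw [mod_left' hneg, at_neg_one ht]
  rcases Nat.odd_mod_four_iff.mp (Nat.odd_iff.mp ht) with ht4 | ht4
  · rw [quadratic_reciprocity_one_mod_four ht4 (Nat.odd_iff.mpr (by omega)), hflip,
      χ₄_nat_one_mod_four ht4]
  · rw [quadratic_reciprocity_three_mod_four ht4 hn, hflip, χ₄_nat_three_mod_four ht4, neg_neg]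

theorem eq_one_of_four_mul_dvd_add_one {r n : ℕ} (h : (4 * r : ℤ) ∣ n + 1) : J(r | n) = 1 := by
  have hr : r ≠ 0 := by
    rintro rfl
    simp only [Nat.cast_zero, mul_zero, zero_dvd_iff] at h
    omega
  have hn4 : n % 4 = 3 := by
    have : (4 : ℤ) ∣ n + 1 := dvd_trans (dvd_mul_right 4 _) h
    omega
  obtain ⟨s, t, ht, rfl⟩ := Nat.exists_eq_two_pow_mul_odd hr
  have htwo : J(2 | n) ^ s = 1 := by
    rcases s with _ | s
    · exact pow_zero _
    · have : (8 : ℤ) ∣ n + 1 := dvd_trans ⟨2 ^ s * t, by push_cast; ring⟩ h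
      rw [at_two_of_mod_eight_eq_seven (by omega), one_pow]
  have hodd : J(t | n) = 1 :=
    eq_one_of_odd_of_dvd_add_one ht hn4 (dvd_trans ⟨4 * 2 ^ s, by push_cast; ring⟩ h)
  push_cast
  rw [mul_left, pow_left, htwo, hodd, one_mul]

end jacobiSym

theorem stmt_11_general (r : ℕ) :
    ∃ a : ℤ, a % 4 = 3 ∧ ∀ p : ℕ, (hp : p.Prime) → p ≠ 2 →
      (p : ℤ) ≡ a [ZMOD (4 * r)] → @legendreSym p ⟨hp⟩ r = 1 := by
  refine ⟨4 * r - 1, by omega, fun p hp _ hmod => ?_⟩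
  have : Fact p.Prime := ⟨hp⟩
  rw [jacobiSym.legendreSym.to_jacobiSym]
  apply jacobiSym.eq_one_of_four_mul_dvd_add_one
  have h := hmod.symm.dvd
  rwa [show (p : ℤ) - (4 * r - 1) = p + 1 - 4 * r by ring, dvd_sub_self_right] at h

theorem stmt_11 (r : ℕ) (hr : 0 < r) :
    ∃ a : ℤ, a % 4 = 3 ∧ ∀ p : ℕ, (hp : p.Prime) → p ≠ 2 →
      (p : ℤ) ≡ a [ZMOD (4 * r)] → @legendreSym p ⟨hp⟩ r = 1 :=
  stmt_11_general r
end

section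
/- Let U denote the Lucas U-sequence with parameters P = Q = 5 and U' the Lucas U-sequence with parameters P = 1, Q = -1 (the Fibonacci sequence). Then for all k ≥ 0, U_{2k}(5,5) = 5^k · U'_{2k}(1,-1). -/
lemma lucasU_aux : ∀ k : ℕ,
    lucasU 5 5 (2 * k) = 5 ^ k * lucasU 1 (-1) (2 * k) ∧
    lucasU 5 5 (2 * k + 1) =
      5 ^ k * (lucasU 1 (-1) (2 * k) + lucasU 1 (-1) (2 * k + 2)) := by
  intro k
  induction k with
  | zero => simp [lucasU]
  | succ n ih =>
    obtain ⟨h1, h2⟩ := ih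
    have e1 : 2 * (n + 1) = 2 * n + 2 := by ring
    rw [e1]
    show lucasU 5 5 (2 * n + 2) = 5 ^ (n + 1) * lucasU 1 (-1) (2 * n + 2) ∧
      lucasU 5 5 (2 * n + 3) =
        5 ^ (n + 1) * (lucasU 1 (-1) (2 * n + 2) + lucasU 1 (-1) (2 * n + 4))
    have fib2 : lucasU 1 (-1) (2 * n + 2) =
        lucasU 1 (-1) (2 * n + 1) + lucasU 1 (-1) (2 * n) := by
      show 1 * lucasU 1 (-1) (2 * n + 1) - (-1) * lucasU 1 (-1) (2 * n) = _
      ring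
    have fib3 : lucasU 1 (-1) (2 * n + 3) =
        lucasU 1 (-1) (2 * n + 2) + lucasU 1 (-1) (2 * n + 1) := by
      show 1 * lucasU 1 (-1) (2 * n + 2) - (-1) * lucasU 1 (-1) (2 * n + 1) = _
      ring
    have fib4 : lucasU 1 (-1) (2 * n + 4) =
        lucasU 1 (-1) (2 * n + 3) + lucasU 1 (-1) (2 * n + 2) := by
      show 1 * lucasU 1 (-1) (2 * n + 3) - (-1) * lucasU 1 (-1) (2 * n + 2) = _
      ring
    have u2 : lucasU 5 5 (2 * n + 2) =
        5 * lucasU 5 5 (2 * n + 1) - 5 * lucasU 5 5 (2 * n) := rfl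
    have u3 : lucasU 5 5 (2 * n + 3) =
        5 * lucasU 5 5 (2 * n + 2) - 5 * lucasU 5 5 (2 * n + 1) := rfl
    constructor
    · rw [u2, h1, h2, fib2]
      ring
    · rw [u3, u2, h1, h2, fib4, fib3, fib2]
      ring

theorem stmt_12 (k : ℕ) : lucasU 5 5 (2 * k) = 5 ^ k * lucasU 1 (-1) (2 * k) :=
  (lucasU_aux k).1
end

section
/- For all k ≥ 0, the Lucas sequences with parameters (5,5) and (1,-1) satisfy: U_{2k+1}(5,5) = 5^k·V_{2k+1}(1,-1), V_{2k+1}(5,5) = 5^{k+1}·U_{2k+1}(1,-1), and V_{2k}(5,5) = 5^k·V_{2k}(1,-1). -/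
lemma lucasVU : ∀ m : ℕ, lucasV 1 (-1) m = 2 * lucasU 1 (-1) (m + 1) - lucasU 1 (-1) m
  | 0 => by simp [lucasU, lucasV]
  | 1 => by simp [lucasU, lucasV]
  | (m + 2) => by
      have a := lucasVU m
      have b := lucasVU (m + 1)
      simp only [lucasU, lucasV] at *
      ring_nf at *
      linarith

lemma aux14 (k : ℕ) :
    lucasU 5 5 (2 * k) = 5 ^ k * lucasU 1 (-1) (2 * k) ∧
    lucasV 5 5 (2 * k) = 5 ^ k * lucasV 1 (-1) (2 * k) ∧
    lucasU 5 5 (2 * k + 1) = 5 ^ k * lucasV 1 (-1) (2 * k + 1) ∧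
    lucasV 5 5 (2 * k + 1) = 5 ^ (k + 1) * lucasU 1 (-1) (2 * k + 1) := by
  induction k with
  | zero => simp [lucasU, lucasV]
  | succ n ih =>
    obtain ⟨h1, h2, h3, h4⟩ := ih
    have hB : lucasV 1 (-1) (2 * n) = 2 * lucasU 1 (-1) (2 * n + 1) - lucasU 1 (-1) (2 * n) :=
      lucasVU (2 * n)
    have hA : lucasV 1 (-1) (2 * n + 1) =
        lucasU 1 (-1) (2 * n + 1) + 2 * lucasU 1 (-1) (2 * n) := by
      have := lucasVU (2 * n + 1)
      simp only [lucasU] at this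
      linarith
    have e1 : 2 * (n + 1) = 2 * n + 1 + 1 := by ring
    rw [e1]
    simp only [lucasU, lucasV]
    rw [h1, h2, h3, h4, hA, hB]
    refine ⟨by ring, by ring, by ring, by ring⟩

theorem stmt_14 (k : ℕ) :
    lucasU 5 5 (2 * k + 1) = 5 ^ k * lucasV 1 (-1) (2 * k + 1) ∧
    lucasV 5 5 (2 * k + 1) = 5 ^ (k + 1) * lucasU 1 (-1) (2 * k + 1) ∧
    lucasV 5 5 (2 * k) = 5 ^ k * lucasV 1 (-1) (2 * k) := by
  obtain ⟨_, h2, h3, h4⟩ := aux14 k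
  exact ⟨h3, h4, h2⟩
end

section
/- Let p be an odd prime, P, Q integers with D = P^2 - 4Q, (D/p) = -1, and p not dividing Q. Let α be a root of x^2 - Px + Q in F_{p^2}. Then the norm N_{F_{p^2}/F_p}(α) = α^{p+1} = Q in F_p, and the order of α in F_{p^2}^× is divisible by lcm(k, ord_p(Q)) and divides 2·lcm(k, ord_p(Q)), where k is the order of the image of α in F_{p^2}^×/F_p^×. -/
theorem stmt_18 (p : ℕ) (hp : p.Prime) (hodd : Odd p) [Fact p.Prime] (P Q : ℤ)
    (hD : legendreSym p (P ^ 2 - 4 * Q) = -1) (hQ : ¬ (p : ℤ) ∣ Q)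
    (α : GaloisField p 2) (hα : α ^ 2 - (P : GaloisField p 2) * α + (Q : GaloisField p 2) = 0)
    (k : ℕ) (hk : 0 < k)
    (hkmem : α ^ k ∈ Set.range (algebraMap (ZMod p) (GaloisField p 2)))
    (hkmin : ∀ j, 0 < j → j < k → α ^ j ∉ Set.range (algebraMap (ZMod p) (GaloisField p 2))) :
    α ^ (p + 1) = (Q : GaloisField p 2) ∧
    Nat.lcm k (orderOf ((Q : ZMod p))) ∣ orderOf α ∧
    orderOf α ∣ 2 * Nat.lcm k (orderOf ((Q : ZMod p))) := by
  classical
  set f := algebraMap (ZMod p) (GaloisField p 2) with hfdef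
  have hf : Function.Injective f := f.injective
  have hfix : ∀ a : ZMod p, (f a) ^ p = f a := fun a => by
    rw [← map_pow, ZMod.pow_card]
  have hPc : (P : GaloisField p 2) = f ((P : ZMod p)) := (map_intCast f P).symm
  have hQc : (Q : GaloisField p 2) = f ((Q : ZMod p)) := (map_intCast f Q).symm
  have hQz : ((Q : ZMod p)) ≠ 0 := by
    rwa [Ne, ZMod.intCast_zmod_eq_zero_iff_dvd]
  have hQK : (Q : GaloisField p 2) ≠ 0 := by
    rw [hQc]
    intro h
    exact hQz (hf (by rw [h, map_zero]))
  have hα0 : α ≠ 0 := by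
    intro h
    rw [h] at hα
    simp at hα
    exact hQK hα
  -- fixed points of the Frobenius lie in the prime field
  have key : ∀ x : GaloisField p 2, x ^ p = x → x ∈ Set.range f := by
    intro x hx
    have hne : (Polynomial.X ^ p - Polynomial.X : Polynomial (GaloisField p 2)) ≠ 0 :=
      FiniteField.X_pow_card_sub_X_ne_zero _ hp.one_lt
    have hdeg : (Polynomial.X ^ p - Polynomial.X : Polynomial (GaloisField p 2)).natDegree = p :=
      FiniteField.X_pow_card_sub_X_natDegree_eq _ hp.one_lt
    set T : Finset (GaloisField p 2) :=
      (Polynomial.X ^ p - Polynomial.X : Polynomial (GaloisField p 2)).roots.toFinset with hT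
    have hTcard : T.card ≤ p := by
      calc T.card ≤ (Polynomial.X ^ p - Polynomial.X :
            Polynomial (GaloisField p 2)).roots.card := Multiset.toFinset_card_le _
        _ ≤ _ := (Polynomial.card_roots' _).trans_eq hdeg
    have hmem : ∀ y : GaloisField p 2, y ^ p = y → y ∈ T := by
      intro y hy
      rw [hT, Multiset.mem_toFinset, Polynomial.mem_roots hne]
      simp [Polynomial.IsRoot, hy]
    have hSsub : (Finset.univ.image f : Finset (GaloisField p 2)) ⊆ T := by
      intro y hy
      obtain ⟨a, _, rfl⟩ := Finset.mem_image.mp hy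
      exact hmem _ (hfix a)
    have hScard : (Finset.univ.image f : Finset (GaloisField p 2)).card = p := by
      rw [Finset.card_image_of_injective _ hf, Finset.card_univ, ZMod.card]
    by_contra hxr
    have hxS : x ∉ (Finset.univ.image f : Finset (GaloisField p 2)) := by
      intro h
      obtain ⟨a, _, ha⟩ := Finset.mem_image.mp h
      exact hxr ⟨a, ha⟩
    have hins : (insert x (Finset.univ.image f : Finset (GaloisField p 2))).card ≤ T.card :=
      Finset.card_le_card (Finset.insert_subset (hmem x hx) hSsub)
    rw [Finset.card_insert_of_notMem hxS, hScard] at hins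
    omega
  -- α^p is the conjugate root
  have hα2 : (α ^ p) ^ 2 - (P : GaloisField p 2) * α ^ p + (Q : GaloisField p 2) = 0 := by
    have h0 := congrArg (frobenius (GaloisField p 2) p) hα
    simp only [map_add, map_sub, map_mul, map_pow, map_zero, frobenius_def] at h0
    rw [hPc, hQc, hfix, hfix, ← hPc, ← hQc] at h0
    exact h0
  have hcase : (α ^ p - α) * (α ^ p + α - (P : GaloisField p 2)) = 0 := by
    linear_combination hα2 - hα
  have hβ : α ^ p = (P : GaloisField p 2) - α := by
    rcases mul_eq_zero.mp hcase with h | h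
    · exfalso
      have hxfix : α ^ p = α := sub_eq_zero.mp h
      obtain ⟨a, ha⟩ := key α hxfix
      have ha' : (a : ZMod p) ^ 2 - (P : ZMod p) * a + (Q : ZMod p) = 0 := by
        apply hf
        rw [map_zero, map_add, map_sub, map_mul, map_pow, ha, ← hPc, ← hQc]
        exact hα
      have hsq : IsSquare (((P ^ 2 - 4 * Q : ℤ) : ZMod p)) := by
        refine ⟨2 * a - (P : ZMod p), ?_⟩
        push_cast
        linear_combination -4 * ha'
      exact (legendreSym.eq_neg_one_iff p).mp hD hsq
    · linear_combination h
  have hnorm : α ^ (p + 1) = (Q : GaloisField p 2) := by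
    rw [pow_succ, hβ]
    linear_combination -hα
  refine ⟨hnorm, ?_, ?_⟩
  · -- lcm divides orderOf α
    have hdvd_of_mem : ∀ j : ℕ, α ^ j ∈ Set.range f → k ∣ j := by
      intro j hj
      obtain ⟨c, hc⟩ := hkmem
      obtain ⟨a, ha⟩ := hj
      have hpow : α ^ j = (α ^ k) ^ (j / k) * α ^ (j % k) := by
        rw [← pow_mul, ← pow_add, Nat.div_add_mod]
      have hne : (α ^ k) ^ (j / k) ≠ 0 := pow_ne_zero _ (pow_ne_zero _ hα0)
      have hmemr : α ^ (j % k) ∈ Set.range f := by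
        refine ⟨a * (c ^ (j / k))⁻¹, ?_⟩
        rw [map_mul, map_inv₀, map_pow, ha, hc, hpow]
        rw [mul_comm ((α ^ k) ^ (j / k)), mul_assoc, mul_inv_cancel₀ hne, mul_one]
      rcases Nat.eq_zero_or_pos (j % k) with h0 | hpos
      · exact Nat.dvd_of_mod_eq_zero h0
      · exact absurd hmemr (hkmin _ hpos (Nat.mod_lt _ hk))
    have hkd : k ∣ orderOf α :=
      hdvd_of_mem _ ⟨1, by rw [map_one, pow_orderOf_eq_one]⟩
    have hQn : ((Q : ZMod p)) ^ orderOf α = 1 := by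
      apply hf
      rw [map_pow, map_one, ← hQc, ← hnorm, ← pow_mul, mul_comm, pow_mul,
        pow_orderOf_eq_one, one_pow]
    exact Nat.lcm_dvd hkd (orderOf_dvd_of_pow_eq_one hQn)
  · -- orderOf α divides 2 * lcm
    set L := Nat.lcm k (orderOf ((Q : ZMod p))) with hL
    obtain ⟨c, hc⟩ := hkmem
    have hkL : k ∣ L := Nat.dvd_lcm_left _ _
    have hmL : orderOf ((Q : ZMod p)) ∣ L := Nat.dvd_lcm_right _ _
    have hfd : f (c ^ (L / k)) = α ^ L := by
      rw [map_pow, hc, ← pow_mul, Nat.mul_div_cancel' hkL]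
    have hQL : ((Q : ZMod p)) ^ L = 1 := orderOf_dvd_iff_pow_eq_one.mp hmL
    have h1 : (α ^ L) ^ p = α ^ L := by rw [← hfd]; exact hfix _
    have key2 : (α ^ L) ^ 2 = 1 := by
      have h2 : (α ^ L) ^ 2 = (α ^ (p + 1)) ^ L := by
        calc (α ^ L) ^ 2 = (α ^ L) ^ p * α ^ L := by rw [h1, sq]
          _ = α ^ ((p + 1) * L) := by rw [← pow_mul, ← pow_add]; ring_nf
          _ = (α ^ (p + 1)) ^ L := by rw [pow_mul]
      rw [h2, hnorm, hQc, ← map_pow, hQL, map_one]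
    apply orderOf_dvd_of_pow_eq_one
    rw [mul_comm, pow_mul, key2]
end
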